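/- arXiv:0812.4630 — 6 statements merged into one kernel-verified Lean document; each statement's English description precedes it below -/
import Mathlib

section
/- Let g be a complex semisimple Lie algebra with adjoint group G, identified with its dual via the Killing form, and let I be a G-invariant polynomial function on g. Then for every x in g, the differential dI(x) (viewed as an element of g via the Killing form) lies in the center of the centralizer g^x of x. -/
/-!
Invariance of `I` says `κ(dI y, ⁅z, y⁆) = 0` for every `y`. If `⁅z, x⁆ = 0`, then on the line
`y = x + s • v` this reads `s * κ(dI (x + s • v), ⁅z, v⁆) = 0`. Since `I` is polynomial, the
second factor is continuous in `s`, so it also vanishes at `s = 0`. Hence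
`κ(⁅dI x, z⁆, v) = κ(dI x, ⁅z, v⁆) = 0` for all `v`, and nondegeneracy of the Killing form gives
`⁅dI x, z⁆ = 0`.
-/

open MvPolynomial

section PolynomialFunction

variable {𝕜 : Type*} [NontriviallyNormedField 𝕜] [CompleteSpace 𝕜]
  {V : Type*} [AddCommGroup V] [Module 𝕜 V] {ι : Type*} [Fintype ι]

theorem continuous_lineDeriv_add_smul_of_eq_eval_repr (b : Module.Basis ι 𝕜 V)
    (P : MvPolynomial ι 𝕜) {I : V → 𝕜} (hI : ∀ x, I x = eval (fun i => b.repr x i) P)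
    (x v w : V) : Continuous fun s : 𝕜 => lineDeriv 𝕜 I (x + s • v) w := by
  let e := b.equivFun
  have hJ : ContDiff 𝕜 1 (eval · P) := (AnalyticOnNhd.eval_mvPolynomial P).contDiff
  have hlineDeriv : ∀ y, lineDeriv 𝕜 I y w = fderiv 𝕜 (eval · P) (e y) (e w) := fun y => by
    refine HasLineDerivAt.lineDeriv ?_
    have := ((hJ.differentiable one_ne_zero) (e y)).hasFDerivAt.hasLineDerivAt (e w)
    refine HasDerivAt.congr_of_eventuallyEq this (.of_forall fun t => ?_)
    dsimp only
    rw [hI]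
    exact congrArg (eval · P) (funext fun i => by simp [e])
  simp only [hlineDeriv, map_add, map_smul]
  exact ((hJ.continuous_fderiv one_ne_zero).comp (by fun_prop)).clm_apply continuous_const

end PolynomialFunction

theorem apply_eq_zero_of_apply_self_eq_zero {𝕜 : Type*} [NontriviallyNormedField 𝕜]
    {V : Type*} [AddCommGroup V] [Module 𝕜 V] (φ : V → Module.Dual 𝕜 V) (A : V →ₗ[𝕜] V)
    (hφ : ∀ y, φ y (A y) = 0) {x : V} (hx : A x = 0) (v : V)
    (hcont : Continuous fun s : 𝕜 => φ (x + s • v) (A v)) : φ x (A v) = 0 := by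
  have hzero : Set.EqOn (fun s : 𝕜 => φ (x + s • v) (A v)) (fun _ => 0) {0}ᶜ := fun s hs => by
    have := hφ (x + s • v)
    rw [map_add, hx, zero_add, map_smul, map_smul, smul_eq_zero] at this
    exact this.resolve_left hs
  simpa using congrFun (hcont.ext_on (dense_compl_singleton 0) continuous_const hzero) 0

theorem differential_of_invariant_mem_center_of_centralizer_general
    (g : Type*) [LieRing g] [LieAlgebra ℂ g] [Module.Finite ℂ g]
    [LieAlgebra.IsKilling ℂ g]
    (I : g → ℂ) (dI : g → g)
    -- `I` is a polynomial function on `g`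
    (hpoly : ∃ (n : ℕ) (bV : Module.Basis (Fin n) ℂ g) (P : MvPolynomial (Fin n) ℂ),
      ∀ x : g, I x = MvPolynomial.eval (fun i => bV.repr x i) P)
    -- `dI x` is the Killing-form gradient of `I` at `x`:  (dI(x), z) = d/dt I(x+tz)|₀
    (hgrad : ∀ x z : g,
      HasDerivAt (fun t : ℂ => I (x + t • z)) (killingForm ℂ g (dI x) z) 0)
    -- `I` is invariant under the adjoint action of the adjoint group `G`
    (hinv : ∀ x z : g, HasDerivAt (fun t : ℂ => I (x + t • ⁅z, x⁆)) 0 0)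
    (x : g) :
    ⁅dI x, x⁆ = 0 ∧ ∀ z : g, ⁅z, x⁆ = 0 → ⁅dI x, z⁆ = 0 := by
  obtain ⟨n, b, P, hP⟩ := hpoly
  have hlineDeriv (y w : g) : lineDeriv ℂ I y w = killingForm ℂ g (dI y) w :=
    HasLineDerivAt.lineDeriv (hgrad y w)
  have hcenter : ∀ z : g, ⁅z, x⁆ = 0 → ⁅dI x, z⁆ = 0 := fun z hz => by
    refine (LieAlgebra.IsKilling.killingForm_nondegenerate ℂ g).1 _ fun v => ?_
    rw [LieModule.traceForm_apply_lie_apply]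
    refine apply_eq_zero_of_apply_self_eq_zero (fun y => killingForm ℂ g (dI y))
      (LieAlgebra.ad ℂ g z) (fun y => (hgrad y _).unique (hinv y z)) hz v ?_
    simpa only [hlineDeriv, LieAlgebra.ad_apply] using
      continuous_lineDeriv_add_smul_of_eq_eval_repr b P hP x v ⁅z, v⁆
  exact ⟨hcenter x (lie_self x), hcenter⟩

/-- For a complex semisimple Lie algebra `g` (identified with its dual via the
Killing form) and a `G`-invariant polynomial function `I` on `g` with Killing-form gradient
`dI`, the element `dI x` lies in the center of the centralizer `g^x` of `x`, i.e. `dI x`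
commutes with `x` and with every element of the centralizer of `x`. -/
theorem differential_of_invariant_mem_center_of_centralizer
    (g : Type*) [LieRing g] [LieAlgebra ℂ g] [Module.Finite ℂ g]
    [LieAlgebra.IsKilling ℂ g] [LieAlgebra.IsSemisimple ℂ g]
    (I : g → ℂ) (dI : g → g)
    -- `I` is a polynomial function on `g`
    (hpoly : ∃ (n : ℕ) (bV : Module.Basis (Fin n) ℂ g) (P : MvPolynomial (Fin n) ℂ),
      ∀ x : g, I x = MvPolynomial.eval (fun i => bV.repr x i) P)
    -- `dI x` is the Killing-form gradient of `I` at `x`:  (dI(x), z) = d/dt I(x+tz)|₀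
    (hgrad : ∀ x z : g,
      HasDerivAt (fun t : ℂ => I (x + t • z)) (killingForm ℂ g (dI x) z) 0)
    -- `I` is invariant under the adjoint action of the adjoint group `G`
    (hinv : ∀ x z : g, HasDerivAt (fun t : ℂ => I (x + t • ⁅z, x⁆)) 0 0)
    (x : g) :
    ⁅dI x, x⁆ = 0 ∧ ∀ z : g, ⁅z, x⁆ = 0 → ⁅dI x, z⁆ = 0 :=
  differential_of_invariant_mem_center_of_centralizer_general g I dI hpoly hgrad hinv x
end

section
/- Let g be a complex semisimple Lie algebra identified with its dual via the Killing form, with the Poisson bracket [p,q](x) = (x, [dp(x), dq(x)]) on polynomial functions. Fix u in g. Then the space V_u spanned by all functions x ↦ I(tu + x), where I ranges over G-invariant polynomials and t over ℂ, is Poisson commutative: [p,q] = 0 for all p,q in V_u. -/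
/-!
The gradient of an invariant polynomial `I` at `y` commutes with `y`. Hence the gradients
`v = ∇I(t • u + x)` and `w = ∇J(s • u + x)` of two translated invariants satisfy
`(t • u + x, [v, w]) = 0` and `(s • u + x, [v, w]) = 0`, and for `t ≠ s` these two linear
equations force `(u, [v, w]) = (x, [v, w]) = 0`. The case `t = s` follows by continuity in `s`,
and bilinearity of `(v, w) ↦ (x, [v, w])` passes from the generators of `V_u` to their span.
-/

open MvPolynomial Submodule

theorem MvPolynomial.hasDerivAt_eval_add_smul {𝕜 σ : Type*} [NontriviallyNormedField 𝕜]
    [Fintype σ] (P : MvPolynomial σ 𝕜) (a v : σ → 𝕜) :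
    HasDerivAt (fun s : 𝕜 => eval (a + s • v) P) (∑ i, v i * eval a (pderiv i P)) 0 := by
  induction P using MvPolynomial.induction_on with
  | C r => simpa using hasDerivAt_const (0 : 𝕜) (eval a (C r))
  | add p q hp hq => simpa [mul_add, Finset.sum_add_distrib] using hp.fun_add hq
  | mul_X p i hp =>
    have hX : HasDerivAt (fun s : 𝕜 => a i + s * v i) (v i) 0 := by
      simpa using ((hasDerivAt_id (0 : 𝕜)).mul_const (v i)).const_add (a i)
    have hXi : ∑ j, v j * eval a (pderiv j (X i : MvPolynomial σ 𝕜)) = v i := by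
      classical
      simp [pderiv_X, Pi.single_apply]
    have hderiv : ∑ j, v j * eval a (pderiv j (p * X i))
        = (∑ j, v j * eval a (pderiv j p)) * a i + eval a p * v i := by
      rw [← hXi]
      simp only [pderiv_mul, map_add, map_mul, eval_X, Finset.mul_sum, Finset.sum_mul,
        ← Finset.sum_add_distrib]
      exact Finset.sum_congr rfl fun j _ => by ring
    rw [hderiv]
    simpa using hp.fun_mul hX

namespace LieAlgebra

section Algebraic

variable {R L : Type*} [CommRing R] [LieRing L] [LieAlgebra R L]

lemma killingForm_lie_eq_zero_of_lie_eq_zero {v y : L} (h : ⁅v, y⁆ = 0) (w : L) :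
    killingForm R L y ⁅v, w⁆ = 0 := by
  rw [← LieModule.traceForm_apply_lie_apply, ← lie_skew, h, neg_zero, map_zero,
    LinearMap.zero_apply]

lemma killingForm_lie_eq_zero_of_ne [IsDomain R] {t s : R} (hts : t ≠ s) {u x v w : L}
    (hv : ⁅v, t • u + x⁆ = 0) (hw : ⁅w, s • u + x⁆ = 0) :
    killingForm R L x ⁅v, w⁆ = 0 := by
  have ht := killingForm_lie_eq_zero_of_lie_eq_zero (R := R) hv w
  have hs := killingForm_lie_eq_zero_of_lie_eq_zero (R := R) hw v
  rw [← lie_skew, map_neg, neg_eq_zero] at hs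
  simp only [map_add, map_smul, LinearMap.add_apply, LinearMap.smul_apply, smul_eq_mul] at ht hs
  have hu : killingForm R L u ⁅v, w⁆ = 0 := by
    have : (t - s) * killingForm R L u ⁅v, w⁆ = 0 := by linear_combination ht - hs
    exact (mul_eq_zero.mp this).resolve_left (sub_ne_zero.mpr hts)
  linear_combination ht - t * hu

lemma killingForm_lie_eq_zero_of_mem_span {S : Set L} {x : L}
    (h : ∀ v ∈ S, ∀ w ∈ S, killingForm R L x ⁅v, w⁆ = 0) {v w : L}
    (hv : v ∈ span R S) (hw : w ∈ span R S) : killingForm R L x ⁅v, w⁆ = 0 := by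
  simpa using LinearMap.BilinMap.apply_apply_mem_of_mem_span ⊥ S S
    ((LieModule.toEnd R L L : L →ₗ[R] Module.End R L).compr₂ (killingForm R L x))
    (fun v hv w hw => by simpa using h v hv w hw) v w hv hw

end Algebraic

variable {𝕜 L : Type*} [NontriviallyNormedField 𝕜] [LieRing L] [LieAlgebra 𝕜 L]

def IsPolynomialFunction (I : L → 𝕜) : Prop :=
  ∃ (n : ℕ) (b : Module.Basis (Fin n) 𝕜 L) (P : MvPolynomial (Fin n) 𝕜),
    ∀ x : L, I x = eval (fun i => b.repr x i) P

/-- Infinitesimal form of invariance under the adjoint group. -/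
def IsAdInvariant (I : L → 𝕜) : Prop :=
  ∀ x z : L, HasDerivAt (fun s : 𝕜 => I (x + s • ⁅z, x⁆)) 0 0

/-- The generators of `V_u`. -/
def translatedInvariants (u : L) : Set (L → 𝕜) :=
  {f | ∃ (I : L → 𝕜) (t : 𝕜), IsPolynomialFunction I ∧ IsAdInvariant I ∧
    f = fun x => I (t • u + x)}

def HasKillingGradientAt (f : L → 𝕜) (v x : L) : Prop :=
  ∀ z : L, HasDerivAt (fun s : 𝕜 => f (x + s • z)) (killingForm 𝕜 L v z) 0

section HasKillingGradientAt

variable {f g : L → 𝕜} {v w x : L}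

lemma hasKillingGradientAt_zero (x : L) : HasKillingGradientAt (0 : L → 𝕜) 0 x := fun _ => by
  simpa using hasDerivAt_const (0 : 𝕜) (0 : 𝕜)

lemma HasKillingGradientAt.add (hf : HasKillingGradientAt f v x)
    (hg : HasKillingGradientAt g w x) : HasKillingGradientAt (f + g) (v + w) x := fun z => by
  simpa using (hf z).fun_add (hg z)

lemma HasKillingGradientAt.const_smul (hf : HasKillingGradientAt f v x) (c : 𝕜) :
    HasKillingGradientAt (c • f) (c • v) x := fun z => by
  simpa using (hf z).const_mul c

lemma HasKillingGradientAt.comp_add_left {a : L} (hf : HasKillingGradientAt f v (a + x)) :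
    HasKillingGradientAt (fun y => f (a + y)) v x := fun z => by
  simpa only [add_assoc] using hf z

lemma HasKillingGradientAt.unique [IsKilling 𝕜 L] (hv : HasKillingGradientAt f v x)
    (hw : HasKillingGradientAt f w x) : v = w :=
  sub_eq_zero.mp <| (IsKilling.killingForm_nondegenerate 𝕜 L).1 _ fun z => by
    rw [LinearMap.map_sub, LinearMap.sub_apply, (hv z).unique (hw z), sub_self]

lemma HasKillingGradientAt.lie_eq_zero [IsKilling 𝕜 L] (hf : IsAdInvariant f)
    (hv : HasKillingGradientAt f v x) : ⁅v, x⁆ = 0 := by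
  refine (IsKilling.killingForm_nondegenerate 𝕜 L).1 _ fun z => ?_
  have := (hv ⁅z, x⁆).unique (hf x z)
  rwa [← lie_skew, map_neg, neg_eq_zero, ← LieModule.traceForm_apply_lie_apply] at this

end HasKillingGradientAt

section KillingGradient

variable [Module.Finite 𝕜 L] [IsKilling 𝕜 L] {ι : Type*} [Fintype ι]

noncomputable def killingGradient (b : Module.Basis ι 𝕜 L) (P : MvPolynomial ι 𝕜) (y : L) : L :=
  ∑ i, eval (b.repr y) (pderiv i P) •
    ((killingForm 𝕜 L).toDual (IsKilling.killingForm_nondegenerate 𝕜 L)).symm (b.coord i)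

lemma killingForm_killingGradient (b : Module.Basis ι 𝕜 L) (P : MvPolynomial ι 𝕜) (y z : L) :
    killingForm 𝕜 L (killingGradient b P y) z =
      ∑ i, b.repr z i * eval (b.repr y) (pderiv i P) := by
  simp [killingGradient, LinearMap.BilinForm.apply_toDual_symm_apply, mul_comm]

lemma hasKillingGradientAt_killingGradient (b : Module.Basis ι 𝕜 L) (P : MvPolynomial ι 𝕜)
    (y : L) : HasKillingGradientAt (fun x => eval (b.repr x) P) (killingGradient b P y) y :=
  fun z => by
    rw [killingForm_killingGradient]
    simpa using hasDerivAt_eval_add_smul P (b.repr y) (b.repr z)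

lemma continuous_killingGradient_smul_add (φ : Module.Dual 𝕜 L) (b : Module.Basis ι 𝕜 L)
    (P : MvPolynomial ι 𝕜) (u x : L) :
    Continuous fun s : 𝕜 => φ (killingGradient b P (s • u + x)) := by
  simp only [killingGradient, map_sum, map_smul, smul_eq_mul, map_add, Finsupp.coe_add,
    Finsupp.coe_smul]
  exact continuous_finsetSum _ fun i _ =>
    ((continuous_eval _).comp (by fun_prop)).mul continuous_const

variable (𝕜) in
def translatedGradients (u x : L) : Set L :=
  {v | ∃ (n : ℕ) (b : Module.Basis (Fin n) 𝕜 L) (P : MvPolynomial (Fin n) 𝕜) (t : 𝕜),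
    IsAdInvariant (fun y => eval (b.repr y) P) ∧ v = killingGradient b P (t • u + x)}

lemma killingForm_lie_eq_zero_of_mem_translatedGradients {u x v w : L}
    (hv : v ∈ translatedGradients 𝕜 u x) (hw : w ∈ translatedGradients 𝕜 u x) :
    killingForm 𝕜 L x ⁅v, w⁆ = 0 := by
  obtain ⟨n, b, P, t, hP, rfl⟩ := hv
  obtain ⟨m, c, Q, s, hQ, rfl⟩ := hw
  set v := killingGradient b P (t • u + x)
  have hv : ⁅v, t • u + x⁆ = 0 := (hasKillingGradientAt_killingGradient b P _).lie_eq_zero hP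
  have hcont := continuous_killingGradient_smul_add
    ((killingForm 𝕜 L x).comp (LieModule.toEnd 𝕜 L L v)) c Q u x
  have hvanish : Set.EqOn (fun s' => killingForm 𝕜 L x ⁅v, killingGradient c Q (s' • u + x)⁆) 0
      {t}ᶜ := fun s' hs' =>
    killingForm_lie_eq_zero_of_ne (Ne.symm hs') hv
      ((hasKillingGradientAt_killingGradient c Q _).lie_eq_zero hQ)
  exact congrFun (hcont.ext_on (dense_compl_singleton t) continuous_const hvanish) s

lemma exists_hasKillingGradientAt_of_mem_span {u : L} {f : L → 𝕜}
    (hf : f ∈ span 𝕜 (translatedInvariants u)) (x : L) :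
    ∃ v ∈ span 𝕜 (translatedGradients 𝕜 u x), HasKillingGradientAt f v x := by
  induction hf using Submodule.span_induction with
  | mem f hf =>
    obtain ⟨I, t, ⟨n, b, P, hIP⟩, hI, rfl⟩ := hf
    obtain rfl : I = fun y => eval (b.repr y) P := funext hIP
    exact ⟨_, subset_span ⟨n, b, P, t, hI, rfl⟩,
      (hasKillingGradientAt_killingGradient b P (t • u + x)).comp_add_left⟩
  | zero => exact ⟨0, zero_mem _, hasKillingGradientAt_zero x⟩
  | add f g _ _ hf hg =>
    obtain ⟨v, hv, hfv⟩ := hf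
    obtain ⟨w, hw, hgw⟩ := hg
    exact ⟨v + w, add_mem hv hw, hfv.add hgw⟩
  | smul c f _ hf =>
    obtain ⟨v, hv, hfv⟩ := hf
    exact ⟨c • v, smul_mem _ c hv, hfv.const_smul c⟩

end KillingGradient

end LieAlgebra

open LieAlgebra in
theorem translated_invariants_poisson_commute_general
    (g : Type*) [LieRing g] [LieAlgebra ℂ g] [Module.Finite ℂ g]
    [LieAlgebra.IsKilling ℂ g]
    (u : g) (p q : g → ℂ) (dp dq : g → g)
    -- `p` and `q` lie in the span `V_u` of the translated invariants
    (hp : p ∈ Submodule.span ℂ {f : g → ℂ | ∃ (I : g → ℂ) (t : ℂ),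
      (∃ (n : ℕ) (bV : Module.Basis (Fin n) ℂ g) (P : MvPolynomial (Fin n) ℂ),
        ∀ x : g, I x = MvPolynomial.eval (fun i => bV.repr x i) P) ∧
      (∀ x z : g, HasDerivAt (fun s : ℂ => I (x + s • ⁅z, x⁆)) 0 0) ∧
      f = fun x => I (t • u + x)})
    (hq : q ∈ Submodule.span ℂ {f : g → ℂ | ∃ (I : g → ℂ) (t : ℂ),
      (∃ (n : ℕ) (bV : Module.Basis (Fin n) ℂ g) (P : MvPolynomial (Fin n) ℂ),
        ∀ x : g, I x = MvPolynomial.eval (fun i => bV.repr x i) P) ∧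
      (∀ x z : g, HasDerivAt (fun s : ℂ => I (x + s • ⁅z, x⁆)) 0 0) ∧
      f = fun x => I (t • u + x)})
    -- `dp`, `dq` are the Killing-form gradients of `p`, `q`
    (hgradp : ∀ x z : g,
      HasDerivAt (fun t : ℂ => p (x + t • z)) (killingForm ℂ g (dp x) z) 0)
    (hgradq : ∀ x z : g,
      HasDerivAt (fun t : ℂ => q (x + t • z)) (killingForm ℂ g (dq x) z) 0) :
    ∀ x : g, killingForm ℂ g x ⁅dp x, dq x⁆ = 0 := by
  intro x
  obtain ⟨v, hv, hpv⟩ := exists_hasKillingGradientAt_of_mem_span hp x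
  obtain ⟨w, hw, hqw⟩ := exists_hasKillingGradientAt_of_mem_span hq x
  rw [HasKillingGradientAt.unique (hgradp x) hpv, HasKillingGradientAt.unique (hgradq x) hqw]
  exact killingForm_lie_eq_zero_of_mem_span
    (fun v hv w hw => killingForm_lie_eq_zero_of_mem_translatedGradients hv hw) hv hw

/-- Fomenko–Mischenko: Fix `u : g`.  The linear span `V_u` of all translated
invariants `x ↦ I (t • u + x)` (`I` an invariant polynomial function, `t : ℂ`) is Poisson
commutative: `[p,q](x) = (x, [dp(x), dq(x)]) = 0` for all `p, q ∈ V_u` and all `x`. -/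
theorem translated_invariants_poisson_commute
    (g : Type*) [LieRing g] [LieAlgebra ℂ g] [Module.Finite ℂ g]
    [LieAlgebra.IsKilling ℂ g] [LieAlgebra.IsSemisimple ℂ g]
    (u : g) (p q : g → ℂ) (dp dq : g → g)
    -- `p` and `q` lie in the span `V_u` of the translated invariants
    (hp : p ∈ Submodule.span ℂ {f : g → ℂ | ∃ (I : g → ℂ) (t : ℂ),
      (∃ (n : ℕ) (bV : Module.Basis (Fin n) ℂ g) (P : MvPolynomial (Fin n) ℂ),
        ∀ x : g, I x = MvPolynomial.eval (fun i => bV.repr x i) P) ∧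
      (∀ x z : g, HasDerivAt (fun s : ℂ => I (x + s • ⁅z, x⁆)) 0 0) ∧
      f = fun x => I (t • u + x)})
    (hq : q ∈ Submodule.span ℂ {f : g → ℂ | ∃ (I : g → ℂ) (t : ℂ),
      (∃ (n : ℕ) (bV : Module.Basis (Fin n) ℂ g) (P : MvPolynomial (Fin n) ℂ),
        ∀ x : g, I x = MvPolynomial.eval (fun i => bV.repr x i) P) ∧
      (∀ x z : g, HasDerivAt (fun s : ℂ => I (x + s • ⁅z, x⁆)) 0 0) ∧
      f = fun x => I (t • u + x)})
    -- `dp`, `dq` are the Killing-form gradients of `p`, `q`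
    (hgradp : ∀ x z : g,
      HasDerivAt (fun t : ℂ => p (x + t • z)) (killingForm ℂ g (dp x) z) 0)
    (hgradq : ∀ x z : g,
      HasDerivAt (fun t : ℂ => q (x + t • z)) (killingForm ℂ g (dq x) z) 0) :
    ∀ x : g, killingForm ℂ g x ⁅dp x, dq x⁆ = 0 :=
  translated_invariants_poisson_commute_general g u p q dp dq hp hq hgradp hgradq
end

section
/- Let g be a complex semisimple Lie algebra with Poisson bracket [p,q](x) = (x,[dp(x),dq(x)]) on polynomial functions. If V is a finite-dimensional subspace of S(g) consisting of pairwise Poisson-commuting polynomials, then for every x in g one has dim{dp(x) : p in V} ≤ b, where b = (dim g + rank g)/2 is the dimension of a Borel subalgebra. -/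
/-!
The gradients of `V` at `x` form the image of the linear map `p ↦ dp(x)`, whose matrix
coefficients are polynomial in `x`. Its rank can therefore only go up on a nonempty Zariski-open
set, and so can the regular elements; the two sets meet, so we may assume `x` regular. There,
Poisson commutativity says that the image is isotropic for the form `(a, c) ↦ κ(x, ⁅a, c⁆)`,
whose radical is the centralizer of `x`, of dimension `rank g`; an isotropic subspace has
dimension at most `(dim g + dim radical) / 2`.
-/

open Module

namespace Module

variable (K M : Type*) [Field K] [AddCommGroup M] [Module K M]

def polynomialFunctions : Subalgebra K (M → K) :=
  Algebra.adjoin K (Set.range fun f : Dual K M => ⇑f)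

variable {K M}

lemma dual_mem_polynomialFunctions (f : Dual K M) : ⇑f ∈ polynomialFunctions K M :=
  Algebra.subset_adjoin ⟨f, rfl⟩

lemma eval_repr_mem_polynomialFunctions {ι : Type*} (b : Basis ι K M) (P : MvPolynomial ι K) :
    (fun x => MvPolynomial.eval (b.repr x) P) ∈ polynomialFunctions K M := by
  induction P using MvPolynomial.induction_on with
  | C a => convert (polynomialFunctions K M).algebraMap_mem a using 1; ext; simp
  | add p q hp hq => convert add_mem hp hq using 1; ext; simp
  | mul_X p i hp =>
    convert mul_mem hp (dual_mem_polynomialFunctions (b.coord i)) using 1; ext; simp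

lemma exists_eval_repr_eq_of_mem_polynomialFunctions {ι : Type*} [Fintype ι] (b : Basis ι K M)
    {φ : M → K} (hφ : φ ∈ polynomialFunctions K M) :
    ∃ P : MvPolynomial ι K, ∀ x, φ x = MvPolynomial.eval (b.repr x) P := by
  induction hφ using Algebra.adjoin_induction with
  | mem _ h =>
    obtain ⟨f, rfl⟩ := h
    refine ⟨∑ i, MvPolynomial.C (f (b i)) * MvPolynomial.X i, fun x => ?_⟩
    have hfx : f x = ∑ i, b.repr x i * f (b i) := by
      conv_lhs => rw [← b.sum_repr x]
      simp only [map_sum, map_smul, smul_eq_mul]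
    simp [hfx, mul_comm]
  | algebraMap a => exact ⟨MvPolynomial.C a, fun x => by simp⟩
  | add φ ψ _ _ hφ hψ =>
    obtain ⟨P, hP⟩ := hφ
    obtain ⟨Q, hQ⟩ := hψ
    exact ⟨P + Q, fun x => by simp [hP, hQ]⟩
  | mul φ ψ _ _ hφ hψ =>
    obtain ⟨P, hP⟩ := hφ
    obtain ⟨Q, hQ⟩ := hψ
    exact ⟨P * Q, fun x => by simp [hP, hQ]⟩

lemma mul_ne_zero_of_mem_polynomialFunctions [Infinite K] [FiniteDimensional K M] {φ ψ : M → K}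
    (hφ : φ ∈ polynomialFunctions K M) (hψ : ψ ∈ polynomialFunctions K M)
    (hφ₀ : φ ≠ 0) (hψ₀ : ψ ≠ 0) : φ * ψ ≠ 0 := by
  let b := finBasis K M
  obtain ⟨P, hP⟩ := exists_eval_repr_eq_of_mem_polynomialFunctions b hφ
  obtain ⟨Q, hQ⟩ := exists_eval_repr_eq_of_mem_polynomialFunctions b hψ
  have hPQ : P * Q ≠ 0 :=
    mul_ne_zero (fun h => hφ₀ (funext fun x => by simp [hP, h]))
      (fun h => hψ₀ (funext fun x => by simp [hQ, h]))
  intro h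
  refine hPQ (MvPolynomial.funext fun v => ?_)
  have hv : ⇑(b.repr (b.equivFun.symm v)) = v := b.equivFun.apply_symm_apply v
  have hx := congrFun h (b.equivFun.symm v)
  simp only [Pi.mul_apply, Pi.zero_apply, hP, hQ, hv] at hx
  rw [map_mul, hx, map_zero]

lemma det_mem_polynomialFunctions {n : Type*} [Fintype n] [DecidableEq n]
    {A : Matrix n n (M → K)} (hA : ∀ i j, A i j ∈ polynomialFunctions K M) :
    A.det ∈ polynomialFunctions K M := by
  rw [Matrix.det_apply]
  refine sum_mem fun σ _ => ?_
  rw [Units.smul_def]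
  exact zsmul_mem (prod_mem fun i _ => hA _ _) _

variable {𝕜 : Type*} [NontriviallyNormedField 𝕜] [Module 𝕜 M]

lemma exists_hasDerivAt_add_smul_of_mem_polynomialFunctions {φ : M → 𝕜}
    (hφ : φ ∈ polynomialFunctions 𝕜 M) (z : M) :
    ∃ ψ ∈ polynomialFunctions 𝕜 M, ∀ x, HasDerivAt (fun t : 𝕜 => φ (x + t • z)) (ψ x) 0 := by
  induction hφ using Algebra.adjoin_induction with
  | mem _ h =>
    obtain ⟨f, rfl⟩ := h
    refine ⟨fun _ => f z, (polynomialFunctions 𝕜 M).algebraMap_mem (f z), fun x => ?_⟩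
    simpa using ((hasDerivAt_id (0 : 𝕜)).mul_const (f z)).const_add (f x)
  | algebraMap a => exact ⟨0, zero_mem _, fun x => hasDerivAt_const _ _⟩
  | add φ₁ φ₂ _ _ h₁ h₂ =>
    obtain ⟨ψ₁, hψ₁, hd₁⟩ := h₁
    obtain ⟨ψ₂, hψ₂, hd₂⟩ := h₂
    exact ⟨ψ₁ + ψ₂, add_mem hψ₁ hψ₂, fun x => (hd₁ x).add (hd₂ x)⟩
  | mul φ₁ φ₂ hφ₁ hφ₂ h₁ h₂ =>
    obtain ⟨ψ₁, hψ₁, hd₁⟩ := h₁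
    obtain ⟨ψ₂, hψ₂, hd₂⟩ := h₂
    refine ⟨ψ₁ * φ₂ + φ₁ * ψ₂, add_mem (mul_mem hψ₁ hφ₂) (mul_mem hφ₁ hψ₂), fun x => ?_⟩
    have h := (hd₁ x).mul (hd₂ x)
    rw [zero_smul, add_zero] at h
    exact h

end Module

section FormGradient

variable {𝕜 M : Type*} [NontriviallyNormedField 𝕜] [AddCommGroup M] [Module 𝕜 M]

def HasFormGradientAt (B : LinearMap.BilinForm 𝕜 M) (p : M → 𝕜) (y x : M) : Prop :=
  ∀ z, HasDerivAt (fun t : 𝕜 => p (x + t • z)) (B y z) 0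

variable {B : LinearMap.BilinForm 𝕜 M} {p q : M → 𝕜} {x y y' : M}

lemma HasFormGradientAt.unique (hB : B.SeparatingLeft) (h : HasFormGradientAt B p y x)
    (h' : HasFormGradientAt B p y' x) : y = y' :=
  sub_eq_zero.1 <| hB _ fun z => by
    rw [map_sub, LinearMap.sub_apply, (h z).unique (h' z), sub_self]

lemma HasFormGradientAt.add (h : HasFormGradientAt B p y x) (h' : HasFormGradientAt B q y' x) :
    HasFormGradientAt B (p + q) (y + y') x := fun z => by
  simpa using (h z).fun_add (h' z)

lemma HasFormGradientAt.const_smul (c : 𝕜) (h : HasFormGradientAt B p y x) :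
    HasFormGradientAt B (c • p) (c • y) x := fun z => by
  simpa using (h z).const_mul c

def gradientMap (hB : B.SeparatingLeft) {V : Submodule 𝕜 (M → 𝕜)} {D : (M → 𝕜) → M → M}
    (hD : ∀ p ∈ V, ∀ x, HasFormGradientAt B p (D p x) x) (x : M) : V →ₗ[𝕜] M where
  toFun p := D p x
  map_add' p q := (hD _ (p + q).2 x).unique hB ((hD p p.2 x).add (hD q q.2 x))
  map_smul' c p := (hD _ (c • p).2 x).unique hB ((hD p p.2 x).const_smul c)

lemma range_gradientMap (hB : B.SeparatingLeft) {V : Submodule 𝕜 (M → 𝕜)}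
    {D : (M → 𝕜) → M → M} (hD : ∀ p ∈ V, ∀ x, HasFormGradientAt B p (D p x) x) (x : M) :
    LinearMap.range (gradientMap hB hD x) = Submodule.span 𝕜 {y | ∃ p ∈ V, y = D p x} := by
  rw [← Submodule.span_eq (LinearMap.range _)]
  congr 1
  ext y
  simp [gradientMap, eq_comm]

lemma dual_comp_mem_polynomialFunctions_of_hasFormGradientAt [FiniteDimensional 𝕜 M]
    (hB : B.Nondegenerate) (hp : p ∈ polynomialFunctions 𝕜 M) {D : M → M}
    (hD : ∀ x, HasFormGradientAt B p (D x) x) (f : Dual 𝕜 M) :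
    (fun x => f (D x)) ∈ polynomialFunctions 𝕜 M := by
  let u := (B.flip.toDual hB.flip).symm f
  obtain ⟨ψ, hψ, hψp⟩ := exists_hasDerivAt_add_smul_of_mem_polynomialFunctions hp u
  convert hψ using 1
  funext x
  rw [(hψp x).unique (hD x u)]
  exact (LinearMap.BilinForm.apply_toDual_symm_apply (hB := hB.flip) f (D x)).symm

end FormGradient

lemma exists_mem_polynomialFunctions_finrank_range_le {K M V W : Type*} [Field K]
    [AddCommGroup M] [Module K M] [AddCommGroup V] [Module K V] [AddCommGroup W] [Module K W]
    [FiniteDimensional K W] (L : M → V →ₗ[K] W)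
    (hL : ∀ v (f : Dual K W), (fun y => f (L y v)) ∈ polynomialFunctions K M) (x : M) :
    ∃ φ ∈ polynomialFunctions K M, φ x ≠ 0 ∧
      ∀ y, φ y ≠ 0 → finrank K (LinearMap.range (L x)) ≤ finrank K (LinearMap.range (L y)) := by
  classical
  set r := finrank K (LinearMap.range (L x))
  let w := finBasis K (LinearMap.range (L x))
  obtain ⟨F, hF⟩ := LinearMap.exists_extend w.equivFun.toLinearMap
  choose v hv using fun k => LinearMap.mem_range.1 (w k).2
  -- `F` extends the coordinates of the basis `w` of `range (L x)` and `L x (v k) = w k`,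
  -- so `T` evaluated at `x` is the identity matrix.
  let T : Matrix (Fin r) (Fin r) (M → K) := Matrix.of fun j k y => F (L y (v k)) j
  have hT : ∀ y, T.det y = (T.map (· y)).det := fun y =>
    RingHom.map_det (Pi.evalRingHom (fun _ => K) y) T
  have hFw : ∀ k, F (L x (v k)) = Pi.single k 1 := fun k => by
    rw [hv k, ← Submodule.subtype_apply, ← LinearMap.comp_apply, hF]
    simp [Finsupp.single_eq_pi_single]
  refine ⟨T.det, det_mem_polynomialFunctions fun j k => hL _ (LinearMap.proj j ∘ₗ F), ?_, ?_⟩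
  · have hTx : T.map (· x) = 1 := by
      ext j k
      simp [T, hFw, Pi.single_apply, Matrix.one_apply]
    simp [hT, hTx]
  · intro y hy
    have hli : LinearIndependent K fun k => L y (v k) := by
      rw [Fintype.linearIndependent_iff]
      intro c hc
      have hmul : (T.map (· y)).mulVec c = 0 := by
        ext j
        simpa [T, Matrix.mulVec, dotProduct, map_sum, mul_comm] using
          congrArg (fun u => F u j) hc
      exact congrFun (Matrix.eq_zero_of_mulVec_eq_zero (hT y ▸ hy) hmul)
    calc r = finrank K (Submodule.span K (Set.range fun k => L y (v k))) := by
          rw [finrank_span_eq_card hli, Fintype.card_fin]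
      _ ≤ _ := Submodule.finrank_mono <| Submodule.span_le.2 <| by
          rintro - ⟨k, rfl⟩
          exact LinearMap.mem_range_self _ _

lemma LinearMap.BilinForm.two_mul_finrank_le_of_le_orthogonal {K V : Type*} [Field K]
    [AddCommGroup V] [Module K V] [FiniteDimensional K V] {B : LinearMap.BilinForm K V}
    {W : Submodule K V} (hW : W ≤ B.orthogonal W) :
    2 * finrank K W ≤ finrank K V + finrank K (LinearMap.ker B) := by
  have h := LinearMap.BilinForm.finrank_add_finrank_orthogonal' (B := B) W
  have hWW := Submodule.finrank_mono hW
  have hker := Submodule.finrank_mono (inf_le_right : W ⊓ LinearMap.ker B ≤ _)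
  omega

namespace LieAlgebra

variable {K L : Type*} [Field K] [LieRing L] [LieAlgebra K L] [FiniteDimensional K L]

lemma exists_isRegular_and_ne_zero [Infinite K] {φ : L → K}
    (hφ : φ ∈ polynomialFunctions K L) (hφ₀ : φ ≠ 0) : ∃ x : L, IsRegular K x ∧ φ x ≠ 0 := by
  classical
  let b := finBasis K L
  let χ : L → K := fun x => MvPolynomial.eval (b.repr x)
    ((LinearMap.polyCharpoly (ad K L : L →ₗ[K] Module.End K L) b).coeff (rank K L))
  have hχ₀ : χ ≠ 0 := fun h => by
    obtain ⟨x, hx⟩ := exists_isRegular K L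
    exact (isRegular_iff_coeff_polyCharpoly_rank_ne_zero K b x).1 hx (congrFun h x)
  obtain ⟨x, hx⟩ : ∃ x, (χ * φ) x ≠ 0 := by
    by_contra! h
    exact mul_ne_zero_of_mem_polynomialFunctions (eval_repr_mem_polynomialFunctions b _) hφ
      hχ₀ hφ₀ (funext h)
  exact ⟨x, (isRegular_iff_coeff_polyCharpoly_rank_ne_zero K b x).2 (left_ne_zero_of_mul hx),
    right_ne_zero_of_mul hx⟩

lemma finrank_ker_ad_le_rank {x : L} (hx : IsRegular K x) :
    finrank K (LinearMap.ker (ad K L x)) ≤ rank K L := by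
  rw [← (isRegular_iff_finrank_engel_eq_rank K x).1 hx]
  exact Submodule.finrank_mono fun a ha =>
    (LieSubalgebra.mem_engel_iff (R := K) x a).2 ⟨1, by simpa using ha⟩

lemma two_mul_finrank_le_of_killingForm_lie_eq_zero [IsKilling K L] {x : L} (hx : IsRegular K x)
    {W : Submodule K L} (hW : ∀ a ∈ W, ∀ c ∈ W, killingForm K L x ⁅a, c⁆ = 0) :
    2 * finrank K W ≤ finrank K L + rank K L := by
  -- `κ(x, ⁅a, c⁆) = κ(⁅x, a⁆, c)`, and the radical of this form is the centralizer of `x`.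
  let B : LinearMap.BilinForm K L := killingForm K L ∘ₗ (ad K L x : L →ₗ[K] L)
  have hker : LinearMap.ker B = LinearMap.ker (ad K L x) :=
    LinearMap.ker_comp_of_ker_eq_bot _ (IsKilling.ker_killingForm_eq_bot K L)
  have hWB : W ≤ B.orthogonal W := fun c hc a ha => by
    simpa [B, LieModule.traceForm_apply_lie_apply] using hW a ha c hc
  calc 2 * finrank K W ≤ finrank K L + finrank K (LinearMap.ker (ad K L x)) :=
        hker ▸ LinearMap.BilinForm.two_mul_finrank_le_of_le_orthogonal hWB
    _ ≤ finrank K L + rank K L := by gcongr; exact finrank_ker_ad_le_rank hx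

end LieAlgebra

theorem poisson_commutative_gradient_space_le_borel_dim_general
    (g : Type*) [LieRing g] [LieAlgebra ℂ g] [Module.Finite ℂ g]
    [LieAlgebra.IsKilling ℂ g]
    (V : Submodule ℂ (g → ℂ))
    (D : (g → ℂ) → g → g)
    -- every element of `V` is a polynomial function on `g`
    (hpoly : ∀ p ∈ V, ∃ (n : ℕ) (bV : Module.Basis (Fin n) ℂ g) (P : MvPolynomial (Fin n) ℂ),
      ∀ x : g, p x = MvPolynomial.eval (fun i => bV.repr x i) P)
    -- `D p x` is the Killing-form gradient of `p` at `x`, for `p ∈ V`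
    (hgrad : ∀ p ∈ V, ∀ x z : g,
      HasDerivAt (fun t : ℂ => p (x + t • z)) (killingForm ℂ g (D p x) z) 0)
    -- the elements of `V` pairwise Poisson commute
    (hcomm : ∀ p ∈ V, ∀ q ∈ V, ∀ x : g, killingForm ℂ g x ⁅D p x, D q x⁆ = 0)
    (x : g) :
    2 * Module.finrank ℂ (Submodule.span ℂ {y : g | ∃ p ∈ V, y = D p x})
      ≤ Module.finrank ℂ g + LieAlgebra.rank ℂ g := by
  have hκ := LieAlgebra.IsKilling.killingForm_nondegenerate ℂ g
  let L := gradientMap hκ.1 hgrad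
  have hL : ∀ (p : V) (f : Dual ℂ g), (fun y => f (L y p)) ∈ polynomialFunctions ℂ g := by
    intro p f
    obtain ⟨n, b, P, hP⟩ := hpoly p p.2
    have hp : (p : g → ℂ) ∈ polynomialFunctions ℂ g := by
      convert eval_repr_mem_polynomialFunctions b P
      exact hP _
    exact dual_comp_mem_polynomialFunctions_of_hasFormGradientAt hκ hp (hgrad p p.2) f
  obtain ⟨φ, hφ, hφx, hφ_le⟩ := exists_mem_polynomialFunctions_finrank_range_le L hL x
  obtain ⟨x₀, hreg, hφx₀⟩ := LieAlgebra.exists_isRegular_and_ne_zero hφ fun h => hφx (congrFun h x)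
  have hiso : ∀ a ∈ LinearMap.range (L x₀), ∀ c ∈ LinearMap.range (L x₀),
      killingForm ℂ g x₀ ⁅a, c⁆ = 0 := by
    rintro - ⟨p, rfl⟩ - ⟨q, rfl⟩
    exact hcomm p p.2 q q.2 x₀
  rw [← range_gradientMap hκ.1 hgrad]
  calc 2 * finrank ℂ (LinearMap.range (L x)) ≤ 2 * finrank ℂ (LinearMap.range (L x₀)) := by
        gcongr; exact hφ_le x₀ hφx₀
    _ ≤ finrank ℂ g + LieAlgebra.rank ℂ g :=
        LieAlgebra.two_mul_finrank_le_of_killingForm_lie_eq_zero hreg hiso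

/-- If `V` is a finite-dimensional subspace of polynomial functions on a complex
semisimple Lie algebra `g` consisting of pairwise Poisson-commuting polynomials, then for
every `x : g` the gradient space `{dp(x) : p ∈ V}` has dimension at most
`b = (dim g + rank g)/2`, the dimension of a Borel subalgebra.  (Stated as
`2 * dim {dp(x) : p ∈ V} ≤ dim g + rank g`.) -/
theorem poisson_commutative_gradient_space_le_borel_dim
    (g : Type*) [LieRing g] [LieAlgebra ℂ g] [Module.Finite ℂ g]
    [LieAlgebra.IsKilling ℂ g] [LieAlgebra.IsSemisimple ℂ g]
    (V : Submodule ℂ (g → ℂ)) (hV : FiniteDimensional ℂ V)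
    (D : (g → ℂ) → g → g)
    -- every element of `V` is a polynomial function on `g`
    (hpoly : ∀ p ∈ V, ∃ (n : ℕ) (bV : Module.Basis (Fin n) ℂ g) (P : MvPolynomial (Fin n) ℂ),
      ∀ x : g, p x = MvPolynomial.eval (fun i => bV.repr x i) P)
    -- `D p x` is the Killing-form gradient of `p` at `x`, for `p ∈ V`
    (hgrad : ∀ p ∈ V, ∀ x z : g,
      HasDerivAt (fun t : ℂ => p (x + t • z)) (killingForm ℂ g (D p x) z) 0)
    -- the elements of `V` pairwise Poisson commute
    (hcomm : ∀ p ∈ V, ∀ q ∈ V, ∀ x : g, killingForm ℂ g x ⁅D p x, D q x⁆ = 0)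
    (x : g) :
    2 * Module.finrank ℂ (Submodule.span ℂ {y : g | ∃ p ∈ V, y = D p x})
      ≤ Module.finrank ℂ g + LieAlgebra.rank ℂ g :=
  poisson_commutative_gradient_space_le_borel_dim_general g V D hpoly hgrad hcomm x
end

section
/- Let g be a complex semisimple Lie algebra, u in h a regular semisimple element of the Cartan subalgebra, n_- the negative nilradical, and N_- the corresponding unipotent subgroup of the adjoint group. Then for every nonzero scalar λ, the adjoint N_- orbit of λu equals the affine plane λu + n_-. -/
/-!
For `z ∈ n_-` every term `(ad z)ᵏ (c • u) / k!` with `k ≥ 1` lies in `n_-`, because `h`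
normalizes `n_-`; so the orbit lies in the plane. Conversely, a point `c • u + m` of the plane is
reached by successive approximation along the lower central series `C₀ = n_- ⊇ C₁ ⊇ ⋯` of
`n_-`: replacing `z` by `z + δ` with `δ ∈ Cₖ` changes `exp (ad z) (c • u)` by `⁅δ, c • u⁆`
modulo `Cₖ₊₁`, and `ad (c • u)` maps each `Cₖ` bijectively onto itself, since it preserves `Cₖ`
and its kernel `h` meets `n_-` trivially. By Engel's theorem `n_-` is nilpotent, so the series
reaches `0` and the approximation becomes exact.
-/

section

variable {g : Type*} [LieRing g] [LieAlgebra ℂ g] [Module.Finite ℂ g]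
  [LieAlgebra.IsKilling ℂ g] [LieAlgebra.IsSemisimple ℂ g]

/-- The exponential of `ad z` (a finite sum since `ad z` is nilpotent on a
finite-dimensional algebra): the typical element of the unipotent group `N_-` is
`exp (ad z)` for `z ∈ n_-`. -/
noncomputable def expAd (z : g) : Module.End ℂ g :=
  ∑ k ∈ Finset.range (Module.finrank ℂ g + 1),
    ((k.factorial : ℂ)⁻¹ • (LieAlgebra.ad ℂ g z : Module.End ℂ g) ^ k)

lemma Module.End.add_pow_apply_sub_pow_apply_mem {R M : Type*} [Semiring R] [AddCommGroup M]
    [Module R M] {S T : Submodule R M} (hST : S ≤ T) {A B : Module.End R M}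
    (hAT : ∀ x ∈ T, A x ∈ T) (hAS : ∀ x ∈ S, A x ∈ S) (hB : ∀ x ∈ T, B x ∈ S) {v : M}
    (hAv : A v ∈ T) (hBv : (A + B) (B v) ∈ S) (j : ℕ) :
    ((A + B) ^ (j + 2)) v - (A ^ (j + 2)) v ∈ S := by
  have step : ∀ i, ((A + B) ^ (i + 1)) v - (A ^ (i + 1)) v =
      (A + B) (((A + B) ^ i) v - (A ^ i) v) + B ((A ^ i) v) := by
    intro i
    simp only [pow_succ', Module.End.mul_apply, map_sub, LinearMap.add_apply]
    abel
  induction j with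
  | zero =>
    rw [step, step 0]
    simpa using add_mem hBv (hB _ hAv)
  | succ j ih =>
    rw [step]
    refine add_mem (add_mem (hAS _ ih) (hB _ (hST ih))) (hB _ ?_)
    rw [pow_succ, Module.End.mul_apply]
    exact Module.End.pow_apply_mem_of_forall_mem _ hAT _ hAv

namespace LieSubalgebra

section CommRing

variable {R L : Type*} [CommRing R] [LieRing L] [LieAlgebra R L] (N : LieSubalgebra R L)

def lowerCentralChain : ℕ → Submodule R L
  | 0 => N.toSubmodule
  | k + 1 => Submodule.span R (Set.image2 (⁅·, ·⁆) (N : Set L) (lowerCentralChain k))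

variable {N}

lemma lie_mem_lowerCentralChain_succ {k : ℕ} {x y : L} (hx : x ∈ N)
    (hy : y ∈ N.lowerCentralChain k) : ⁅x, y⁆ ∈ N.lowerCentralChain (k + 1) :=
  Submodule.subset_span (Set.mem_image2_of_mem hx hy)

lemma lowerCentralChain_le (k : ℕ) : N.lowerCentralChain k ≤ N.toSubmodule := by
  induction k with
  | zero => exact le_rfl
  | succ k ih =>
    exact Submodule.span_le.2 <| Set.image2_subset_iff.2 fun x hx y hy => N.lie_mem hx (ih hy)

lemma lowerCentralChain_antitone : Antitone N.lowerCentralChain := by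
  refine antitone_nat_of_succ_le fun k => ?_
  induction k with
  | zero => exact lowerCentralChain_le 1
  | succ k ih =>
    exact Submodule.span_le.2 <| Set.image2_subset_iff.2 fun x hx y hy =>
      lie_mem_lowerCentralChain_succ hx (ih hy)

lemma lie_mem_lowerCentralChain {x : L} (hx : x ∈ N.normalizer) (k : ℕ) {y : L}
    (hy : y ∈ N.lowerCentralChain k) : ⁅x, y⁆ ∈ N.lowerCentralChain k := by
  induction k generalizing y with
  | zero => exact (N.mem_normalizer_iff x).1 hx y hy
  | succ k ih =>
    suffices N.lowerCentralChain (k + 1) ≤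
        (N.lowerCentralChain (k + 1)).comap (LieAlgebra.ad R L x) from this hy
    refine Submodule.span_le.2 <| Set.image2_subset_iff.2 fun a ha b hb => ?_
    rw [SetLike.mem_coe, Submodule.mem_comap, LieAlgebra.ad_apply, leibniz_lie]
    exact add_mem (lie_mem_lowerCentralChain_succ ((N.mem_normalizer_iff x).1 hx a ha) hb)
      (lie_mem_lowerCentralChain_succ ha (ih hb))

lemma lowerCentralChain_le_map_lowerCentralSeries (k : ℕ) :
    N.lowerCentralChain k ≤
      (LieModule.lowerCentralSeries R N N k).toSubmodule.map N.toSubmodule.subtype := by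
  induction k with
  | zero => intro x hx; exact ⟨⟨x, hx⟩, by simp, rfl⟩
  | succ k ih =>
    refine Submodule.span_le.2 <| Set.image2_subset_iff.2 fun a ha b hb => ?_
    obtain ⟨b', hb', rfl⟩ := ih hb
    refine ⟨⁅(⟨a, ha⟩ : N), b'⁆, ?_, rfl⟩
    rw [LieModule.lowerCentralSeries_succ]
    exact LieSubmodule.lie_mem_lie (LieSubmodule.mem_top _) hb'

end CommRing

lemma exists_lowerCentralChain_eq_bot {K L : Type*} [Field K] [LieRing L] [LieAlgebra K L]
    [FiniteDimensional K L] {N : LieSubalgebra K L}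
    (hN : ∀ x ∈ N, IsNilpotent (LieAlgebra.ad K L x)) : ∃ k, N.lowerCentralChain k = ⊥ := by
  have : LieRing.IsNilpotent N := LieAlgebra.isNilpotent_iff_forall.2 fun x =>
    N.isNilpotent_ad_of_isNilpotent_ad (hN x x.2)
  obtain ⟨k, hk⟩ := LieModule.IsNilpotent.nilpotent K N N
  refine ⟨k, _root_.eq_bot_iff.2 ?_⟩
  simpa [hk] using lowerCentralChain_le_map_lowerCentralSeries (N := N) k

end LieSubalgebra

lemma expAd_zero {L : Type*} [LieRing L] [LieAlgebra ℂ L] : expAd (0 : L) = 1 := by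
  simp [expAd, Finset.sum_range_succ', zero_pow]

namespace LieSubalgebra

variable {L : Type*} [LieRing L] [LieAlgebra ℂ L] (N : LieSubalgebra ℂ L)

lemma expAd_apply_sub_mem {z v : L} (hz : z ∈ N) (hv : v ∈ N.normalizer) :
    expAd z v - v ∈ N := by
  rw [expAd, LinearMap.sum_apply, Finset.sum_range_succ']
  simp only [Nat.factorial_zero, Nat.cast_one, inv_one, pow_zero, one_smul,
    Module.End.one_apply, add_sub_cancel_right]
  refine Submodule.sum_mem _ fun j _ => Submodule.smul_mem _ _ ?_
  rw [pow_succ, Module.End.mul_apply]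
  exact Module.End.pow_apply_mem_of_forall_mem _ (fun x hx => N.lie_mem hz hx) _
    ((N.mem_normalizer_iff' v).1 hv z hz)

variable [FiniteDimensional ℂ L]

lemma expAd_add_apply_sub_mem {z δ v : L} {k : ℕ} (hz : z ∈ N)
    (hδ : δ ∈ N.lowerCentralChain k) (hv : v ∈ N.normalizer) :
    expAd (z + δ) v - expAd z v - ⁅δ, v⁆ ∈ N.lowerCentralChain (k + 1) := by
  rcases hL : Module.finrank ℂ L with _ | n
  · have : Subsingleton L := Module.finrank_zero_iff.1 hL
    simp only [Subsingleton.eq_zero, zero_mem]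
  have hδN : δ ∈ N := lowerCentralChain_le k hδ
  have hδv : ⁅δ, v⁆ ∈ N.lowerCentralChain k := by
    rw [← lie_skew]
    exact neg_mem (lie_mem_lowerCentralChain hv k hδ)
  have key := Module.End.add_pow_apply_sub_pow_apply_mem (lowerCentralChain_le (N := N) (k + 1))
    (A := LieAlgebra.ad ℂ L z) (B := LieAlgebra.ad ℂ L δ) (v := v)
    (fun x hx => N.lie_mem hz hx)
    (fun x hx => lowerCentralChain_antitone k.succ.le_succ (lie_mem_lowerCentralChain_succ hz hx))
    (fun x hx => by
      rw [LieAlgebra.ad_apply, ← lie_skew]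
      exact neg_mem (lie_mem_lowerCentralChain_succ hx hδ))
    ((N.mem_normalizer_iff' v).1 hv z hz)
    (by rw [← map_add]; exact lie_mem_lowerCentralChain_succ (N.add_mem hz hδN) hδv)
  -- only the degree-one term `⁅δ, v⁆` of the difference survives modulo the next chain member
  rw [expAd, expAd, map_add, hL, LinearMap.sum_apply, LinearMap.sum_apply, ← Finset.sum_sub_distrib,
    Finset.sum_range_succ', Finset.sum_range_succ']
  simp only [LinearMap.smul_apply, ← smul_sub, pow_zero, sub_self, add_zero, zero_add,
    pow_one, Nat.factorial_one, Nat.cast_one, inv_one, one_smul, LinearMap.add_apply,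
    add_sub_cancel_left, LieAlgebra.ad_apply, add_sub_cancel_right]
  exact Submodule.sum_mem _ fun j _ => Submodule.smul_mem _ _ (key j)

lemma exists_expAd_apply_sub_mem_lowerCentralChain {v : L} (hv : v ∈ N.normalizer)
    (hreg : Disjoint (LinearMap.ker (LieAlgebra.ad ℂ L v)) N.toSubmodule) {m : L} (hm : m ∈ N)
    (k : ℕ) : ∃ z ∈ N, v + m - expAd z v ∈ N.lowerCentralChain k := by
  induction k with
  | zero => exact ⟨0, N.zero_mem, by rwa [expAd_zero, Module.End.one_apply, add_sub_cancel_left]⟩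
  | succ k ih =>
    obtain ⟨z, hz, he⟩ := ih
    obtain ⟨δ, hδ, hδv⟩ : ∃ δ ∈ N.lowerCentralChain k, ⁅v, δ⁆ = -(v + m - expAd z v) :=
      (LinearMap.injOn_iff_surjOn (fun x hx => lie_mem_lowerCentralChain hv k hx)).1
        (LinearMap.injOn_of_disjoint_ker (lowerCentralChain_le k) hreg.symm) (neg_mem he)
    refine ⟨z + δ, N.add_mem hz (lowerCentralChain_le k hδ), ?_⟩
    convert neg_mem (N.expAd_add_apply_sub_mem hz hδ hv) using 1
    rw [← lie_skew, hδv]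
    abel

lemma exists_expAd_apply_eq (hN : ∀ x ∈ N, IsNilpotent (LieAlgebra.ad ℂ L x)) {v : L}
    (hv : v ∈ N.normalizer)
    (hreg : Disjoint (LinearMap.ker (LieAlgebra.ad ℂ L v)) N.toSubmodule) {m : L} (hm : m ∈ N) :
    ∃ z ∈ N, expAd z v = v + m := by
  obtain ⟨k, hk⟩ := exists_lowerCentralChain_eq_bot hN
  obtain ⟨z, hz, he⟩ := N.exists_expAd_apply_sub_mem_lowerCentralChain hv hreg hm k
  rw [hk, Submodule.mem_bot, sub_eq_zero] at he
  exact ⟨z, hz, he.symm⟩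

end LieSubalgebra

theorem unipotent_orbit_of_regular_semisimple_eq_affine_plane_general
    (H Nneg : Submodule ℂ g)
    -- `n_-` is a nilpotent subalgebra normalized by `h`
    (hbr : ∀ x ∈ Nneg, ∀ y ∈ Nneg, ⁅x, y⁆ ∈ Nneg)
    (hHN : ∀ x ∈ H, ∀ y ∈ Nneg, ⁅x, y⁆ ∈ Nneg)
    (hnil : ∀ z ∈ Nneg, IsNilpotent (LieAlgebra.ad ℂ g z : Module.End ℂ g))
    (hdisj : H ⊓ Nneg = ⊥)
    (u : g) (hu : u ∈ H)
    -- `u` is regular: no root vanishes on `u`, i.e. its centralizer is exactly `h`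
    (hreg : LinearMap.ker (LieAlgebra.ad ℂ g u : Module.End ℂ g) = H)
    (c : ℂ) (hc : c ≠ 0) :
    {v : g | ∃ z ∈ Nneg, v = expAd z (c • u)} = {v : g | ∃ m ∈ Nneg, v = c • u + m} := by
  let N : LieSubalgebra ℂ g := { toSubmodule := Nneg, lie_mem' := fun hx hy => hbr _ hx _ hy }
  have hcu : c • u ∈ N.normalizer := (N.mem_normalizer_iff _).2 fun y hy => by
    rw [smul_lie]
    exact Nneg.smul_mem c (hHN u hu y hy)
  have hcu_reg : Disjoint (LinearMap.ker (LieAlgebra.ad ℂ g (c • u))) N.toSubmodule := by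
    rw [map_smul, LinearMap.ker_smul _ _ hc, hreg]
    exact disjoint_iff.2 hdisj
  ext w
  constructor
  · rintro ⟨z, hz, rfl⟩
    exact ⟨_, N.expAd_apply_sub_mem hz hcu, (add_sub_cancel _ _).symm⟩
  · rintro ⟨m, hm, rfl⟩
    obtain ⟨z, hz, hzm⟩ := N.exists_expAd_apply_eq hnil hcu hcu_reg hm
    exact ⟨z, hz, hzm.symm⟩

/-- Let `u ∈ h` be regular (its centralizer is `h`) and `n_-` the negative
nilradical, `N_- = exp(ad n_-)` the corresponding unipotent group.  Then for every nonzero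
scalar `c`, the adjoint `N_-` orbit of `c • u` equals the affine plane `c • u + n_-`. -/
theorem unipotent_orbit_of_regular_semisimple_eq_affine_plane
    (H Nneg : Submodule ℂ g)
    (hHCartan : ∃ (Hl : LieSubalgebra ℂ g), Hl.IsCartanSubalgebra ∧ Hl.toSubmodule = H)
    -- `n_-` is a nilpotent subalgebra normalized by `h`
    (hbr : ∀ x ∈ Nneg, ∀ y ∈ Nneg, ⁅x, y⁆ ∈ Nneg)
    (hHN : ∀ x ∈ H, ∀ y ∈ Nneg, ⁅x, y⁆ ∈ Nneg)
    (hnil : ∀ z ∈ Nneg, IsNilpotent (LieAlgebra.ad ℂ g z : Module.End ℂ g))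
    (hdisj : H ⊓ Nneg = ⊥)
    (u : g) (hu : u ∈ H)
    -- `u` is regular: no root vanishes on `u`, i.e. its centralizer is exactly `h`
    (hreg : LinearMap.ker (LieAlgebra.ad ℂ g u : Module.End ℂ g) = H)
    (c : ℂ) (hc : c ≠ 0) :
    {v : g | ∃ z ∈ Nneg, v = expAd z (c • u)} = {v : g | ∃ m ∈ Nneg, v = c • u + m} :=
  unipotent_orbit_of_regular_semisimple_eq_affine_plane_general H Nneg hbr hHN hnil hdisj u hu hreg
    c hc

end
end

section
/- Let g be a complex semisimple Lie algebra with symplectic (KKS) structure ω on each adjoint orbit, given at x by ω_x(-[z,x], -[y,x]) = (x,[y,z]). For a regular adjoint orbit O, the intersection Hess(O) = O ∩ (e_1 + b_-) is an isotropic submanifold: for v in Hess(O) and tangent vectors τ_i = -[z_i, v] with z_i in n_-, one has ω_v(τ_1, τ_2) = (v, [z_2, z_1]) = 0. -/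
/-!
The eigenvalues of `ad w` grade `g` by integers, the bracket adds degrees, and an invariant form
pairs degrees `k` and `l` trivially unless `k + l = 0`. Every point of `e₁ + b₋` has degree
`≤ 2` while `[n₋, n₋]` has degree `≤ -4`, so the two are Killing-orthogonal.
-/

section

variable {g : Type*} [LieRing g] [LieAlgebra ℂ g] [Module.Finite ℂ g]
  [LieAlgebra.IsKilling ℂ g] [LieAlgebra.IsSemisimple ℂ g]

/-- One step of the adjoint action by an elementary automorphism of `G`. -/
noncomputable def AdjRel (x y : g) : Prop :=
  ∃ z : g, IsNilpotent (LieAlgebra.ad ℂ g z : Module.End ℂ g) ∧ y = expAd z x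

/-- `O` is an orbit of the adjoint group `G`. -/
noncomputable def IsAdjointOrbit (O : Set g) : Prop :=
  ∃ x : g, O = {y : g | Relation.EqvGen AdjRel x y}

/-- `O` is a regular adjoint orbit. -/
noncomputable def IsRegularAdjointOrbit (O : Set g) : Prop :=
  IsAdjointOrbit O ∧ ∀ x ∈ O,
    Module.finrank ℂ (LinearMap.ker (LieAlgebra.ad ℂ g x : Module.End ℂ g))
      = LieAlgebra.rank ℂ g

namespace LieAlgebra

open Module.End

variable {R L : Type*} [CommRing R] [LieRing L] [LieAlgebra R L]

lemma mem_eigenspace_ad_iff {w x : L} {a : R} :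
    x ∈ (ad R L w).eigenspace a ↔ ⁅w, x⁆ = a • x := by
  rw [mem_eigenspace_iff, ad_apply]

lemma lie_mem_eigenspace_ad {w x y : L} {a b : R}
    (hx : x ∈ (ad R L w).eigenspace a) (hy : y ∈ (ad R L w).eigenspace b) :
    ⁅x, y⁆ ∈ (ad R L w).eigenspace (a + b) := by
  rw [mem_eigenspace_ad_iff] at hx hy ⊢
  rw [leibniz_lie, hx, hy, smul_lie, lie_smul, add_smul, add_comm]

lemma bilinForm_eq_zero_of_mem_eigenspace_ad [NoZeroDivisors R]
    {Φ : LinearMap.BilinForm R L} (hΦ : Φ.lieInvariant L) {w x y : L} {a b : R}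
    (hx : x ∈ (ad R L w).eigenspace a) (hy : y ∈ (ad R L w).eigenspace b) (hab : a + b ≠ 0) :
    Φ x y = 0 := by
  rw [mem_eigenspace_ad_iff] at hx hy
  have hinv := hΦ w x y
  rw [hx, hy, map_smul, map_smul, LinearMap.smul_apply, smul_eq_mul, smul_eq_mul] at hinv
  have : (a + b) * Φ x y = 0 := by linear_combination hinv
  exact (mul_eq_zero.mp this).resolve_left hab

variable (R) in
def adEigenspacesLE (w : L) (n : ℤ) : Submodule R L :=
  ⨆ (k : ℤ) (_ : k ≤ n), (ad R L w).eigenspace (k : R)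

lemma eigenspace_le_adEigenspacesLE {w : L} {k n : ℤ} (hkn : k ≤ n) :
    (ad R L w).eigenspace (k : R) ≤ adEigenspacesLE R w n :=
  le_iSup₂_of_le (f := fun (k : ℤ) (_ : k ≤ n) => (ad R L w).eigenspace (k : R)) k hkn le_rfl

lemma adEigenspacesLE_mono (w : L) : Monotone (adEigenspacesLE R w) :=
  fun _ _ hmn => iSup₂_le fun _ hk => eigenspace_le_adEigenspacesLE (hk.trans hmn)

lemma lie_mem_adEigenspacesLE {w x y : L} {m n : ℤ}
    (hx : x ∈ adEigenspacesLE R w m) (hy : y ∈ adEigenspacesLE R w n) :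
    ⁅x, y⁆ ∈ adEigenspacesLE R w (m + n) := by
  have of_eigen : ∀ k ≤ m, ∀ x ∈ (ad R L w).eigenspace (k : R),
      adEigenspacesLE R w n ≤ (adEigenspacesLE R w (m + n)).comap (ad R L x) :=
    fun k hk x hx => iSup₂_le fun l hl y hy => by
      refine eigenspace_le_adEigenspacesLE (show k + l ≤ m + n by omega) ?_
      simpa only [Int.cast_add, Submodule.mem_comap, ad_apply] using lie_mem_eigenspace_ad hx hy
  have : adEigenspacesLE R w m ≤ (adEigenspacesLE R w (m + n)).comap (ad R L y) :=
    iSup₂_le fun k hk x hx => by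
      rw [Submodule.mem_comap, ad_apply, ← neg_mem_iff, lie_skew]
      exact of_eigen k hk x hx hy
  rw [← lie_skew, neg_mem_iff]
  exact this hx

lemma bilinForm_eq_zero_of_mem_adEigenspacesLE [NoZeroDivisors R] [CharZero R]
    {Φ : LinearMap.BilinForm R L} (hΦ : Φ.lieInvariant L) {w x y : L} {m n : ℤ}
    (hx : x ∈ adEigenspacesLE R w m) (hy : y ∈ adEigenspacesLE R w n)
    (hmn : m + n < 0) :
    Φ x y = 0 := by
  have of_eigen : ∀ k ≤ m, ∀ x ∈ (ad R L w).eigenspace (k : R),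
      adEigenspacesLE R w n ≤ LinearMap.ker (Φ x) :=
    fun k hk x hx => iSup₂_le fun l hl y hy =>
      bilinForm_eq_zero_of_mem_eigenspace_ad hΦ hx hy (by exact_mod_cast (by omega : k + l ≠ 0))
  have : adEigenspacesLE R w m ≤ LinearMap.ker (Φ.flip y) :=
    iSup₂_le fun k hk x hx => of_eigen k hk x hx hy
  exact this hx

end LieAlgebra

set_option linter.unusedSectionVars false in
open LieAlgebra in
theorem hessenberg_isotropic_in_regular_orbit_general
    (H : LieSubalgebra ℂ g)
    (w e : g)
    (hwe : ⁅w, e⁆ = (2 : ℂ) • e)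
    (hH0 : H.toSubmodule = (LieAlgebra.ad ℂ g w : Module.End ℂ g).eigenspace 0)
    (Nneg : Submodule ℂ g)
    (hN : Nneg = ⨆ k : ℕ,
      (LieAlgebra.ad ℂ g w : Module.End ℂ g).eigenspace (-(2 * ((k : ℂ) + 1))))
    (e1 : g) (c : ℂ) (he1 : e1 = c • e)
    (Hess : Set g) (hHess : Hess = {v : g | ∃ m ∈ H.toSubmodule ⊔ Nneg, v = e1 + m})
    (O : Set g)
    (v : g) (hv : v ∈ O ∩ Hess)
    (z₁ z₂ : g) (hz₁ : z₁ ∈ Nneg) (hz₂ : z₂ ∈ Nneg) :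
    killingForm ℂ g v ⁅z₂, z₁⁆ = 0 := by
  subst hHess
  obtain ⟨-, m, hm, rfl⟩ := hv
  have hNneg : Nneg ≤ adEigenspacesLE ℂ w (-2) := hN ▸ iSup_le fun k => by
    simpa using eigenspace_le_adEigenspacesLE (R := ℂ) (w := w)
      (show -(2 * ((k : ℤ) + 1)) ≤ -2 by omega)
  have hm : m ∈ adEigenspacesLE ℂ w 0 := by
    refine sup_le ?_ (hNneg.trans (adEigenspacesLE_mono w (by norm_num))) hm
    simpa [hH0] using eigenspace_le_adEigenspacesLE (R := ℂ) (w := w) (le_refl 0)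
  have he1 : e1 ∈ adEigenspacesLE ℂ w 2 := by
    refine eigenspace_le_adEigenspacesLE (R := ℂ) (le_refl 2) ?_
    rw [mem_eigenspace_ad_iff, he1, lie_smul, hwe, smul_comm, Int.cast_ofNat]
  exact bilinForm_eq_zero_of_mem_adEigenspacesLE (LieModule.traceForm_lieInvariant ℂ g g)
    (add_mem he1 (adEigenspacesLE_mono w (by norm_num) hm))
    (lie_mem_adEigenspacesLE (hNneg hz₂) (hNneg hz₁)) (by norm_num)

/-- With the KKS symplectic form `ω_x(-[z,x], -[y,x]) = (x,[y,z])` on adjoint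
orbits, `Hess(O) = O ∩ (e₁ + b_-)` is isotropic: for `v ∈ Hess(O)` and tangent vectors
`τ_i = -[z_i, v]` with `z_i ∈ n_-`, one has `ω_v(τ₁, τ₂) = (v, [z₂, z₁]) = 0`. -/
theorem hessenberg_isotropic_in_regular_orbit
    (H : LieSubalgebra ℂ g) (hH : H.IsCartanSubalgebra)
    (w e f : g)
    (hwe : ⁅w, e⁆ = (2 : ℂ) • e) (hwf : ⁅w, f⁆ = -(2 : ℂ) • f) (hef : ⁅e, f⁆ = w)
    (hwH : w ∈ H)
    (hH0 : H.toSubmodule = (LieAlgebra.ad ℂ g w : Module.End ℂ g).eigenspace 0)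
    (Nneg : Submodule ℂ g)
    (hN : Nneg = ⨆ k : ℕ,
      (LieAlgebra.ad ℂ g w : Module.End ℂ g).eigenspace (-(2 * ((k : ℂ) + 1))))
    (e1 : g) (c : ℂ) (hc : c ≠ 0) (he1 : e1 = c • e)
    (hnorm : killingForm ℂ g e1 f = 1)
    (Hess : Set g) (hHess : Hess = {v : g | ∃ m ∈ H.toSubmodule ⊔ Nneg, v = e1 + m})
    (O : Set g) (hO : IsRegularAdjointOrbit O)
    (v : g) (hv : v ∈ O ∩ Hess)
    (z₁ z₂ : g) (hz₁ : z₁ ∈ Nneg) (hz₂ : z₂ ∈ Nneg) :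
    killingForm ℂ g v ⁅z₂, z₁⁆ = 0 :=
  hessenberg_isotropic_in_regular_orbit_general H w e hwe hH0 Nneg hN e1 c he1 Hess hHess O v hv z₁
    z₂ hz₁ hz₂

end
end

section
/- Let g be a complex semisimple Lie algebra, q = ℂf + b with b a Borel subalgebra and f the opposite principal nilpotent, and q_- = ℂe + b_-. Then g = q ⊕ q_-^⊥, where q_-^⊥ is the Killing-form orthocomplement of q_-, and the restriction map S(q) → A(q_-) (polynomial functions on g restricted to the affine subspace q_-) is an algebra isomorphism. -/
/-!
Let `n` be the sum of the `ad w`-eigenspaces for the eigenvalues `2, 4, 6, …`, so that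
`q = ℂf + 𝔥 + n`. The Killing form pairs the `ad w`-eigenspaces for `λ` and `μ` trivially unless
`λ + μ = 0`, it is nondegenerate on `𝔥`, and `(e, f) ≠ 0`, because `(w, w) = 2 (e, f)` is a sum
of squares of the eigenvalues of `ad w`, which are integers by `sl₂`-theory. This gives
`q ∩ q_-^⊥ = 0`, and applied to the triple `(-w, f, e)` also `q_- ∩ q^⊥ = 0`; the Killing form
being nondegenerate, these force `dim q = dim q_-`, hence `g = q ⊕ q_-^⊥` and `g = q_- ⊕ q^⊥`.

A polynomial in the functionals `(y, ·)`, `y ∈ q`, is invariant under translation by `q^⊥`, so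
`g = q_- ⊕ q^⊥` makes restriction to `q_-` injective. It is onto `A(q_-)` because `(y, ·)` and
`(y', ·)` agree on `q_-` when `y'` is the `q`-component of `y` in `g = q ⊕ q_-^⊥`.
-/

section

variable {g : Type*} [LieRing g] [LieAlgebra ℂ g] [Module.Finite ℂ g]
  [LieAlgebra.IsKilling ℂ g] [LieAlgebra.IsSemisimple ℂ g]

def restrictHom (W : Submodule ℂ g) : (g → ℂ) →ₐ[ℂ] (W → ℂ) where
  toFun f := fun v => f v
  map_one' := rfl
  map_mul' _ _ := rfl
  map_zero' := rfl
  map_add' _ _ := rfl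
  commutes' _ := rfl

section LinearAlgebra

open Module

lemma Module.End.eigenspace_neg {R M : Type*} [CommRing R] [AddCommGroup M] [Module R M]
    (f : End R M) (μ : R) : (-f).eigenspace μ = f.eigenspace (-μ) := by
  ext v
  simp only [End.mem_eigenspace_iff, LinearMap.neg_apply, neg_eq_iff_eq_neg, neg_smul]

theorem LinearMap.BilinForm.Nondegenerate.isCompl_orthogonal_of_disjoint {K V : Type*} [Field K]
    [AddCommGroup V] [Module K V] [FiniteDimensional K V] {B : LinearMap.BilinForm K V}
    (hB : B.Nondegenerate) {P P' : Submodule K V} (h₁ : Disjoint P (B.orthogonal P'))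
    (h₂ : Disjoint P' (B.orthogonal P)) : IsCompl P (B.orthogonal P') := by
  have le₁ := Submodule.finrank_add_finrank_le_of_disjoint h₁
  have le₂ := Submodule.finrank_add_finrank_le_of_disjoint h₂
  rw [finrank_orthogonal hB] at le₁ le₂
  refine (Submodule.isCompl_iff_disjoint _ _ ?_).mpr h₁
  have := P.finrank_le
  have := P'.finrank_le
  rw [finrank_orthogonal hB]
  omega

end LinearAlgebra

section PolynomialFunctions

variable {R V : Type*} [CommRing R] [AddCommGroup V] [Module R V] {B : LinearMap.BilinForm R V}
  {P P' : Submodule R V}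

lemma apply_add_eq_of_mem_adjoin {p : V → R}
    (hp : p ∈ Algebra.adjoin R {p | ∃ y ∈ P, p = fun x ↦ B y x}) (v : V) {o : V}
    (ho : o ∈ B.orthogonal P) : p (v + o) = p v := by
  suffices Algebra.adjoin R {p | ∃ y ∈ P, p = fun x ↦ B y x} ≤
      AlgHom.equalizer (Pi.evalAlgHom R (fun _ ↦ R) (v + o)) (Pi.evalAlgHom R _ v) from this hp
  rw [Algebra.adjoin_le_iff]
  rintro _ ⟨y, hy, rfl⟩
  simp [LinearMap.BilinForm.mem_orthogonal_iff.mp ho y hy]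

lemma eq_of_forall_mem_eq_of_mem_adjoin (hcod : Codisjoint P' (B.orthogonal P)) {p₁ p₂ : V → R}
    (hp₁ : p₁ ∈ Algebra.adjoin R {p | ∃ y ∈ P, p = fun x ↦ B y x})
    (hp₂ : p₂ ∈ Algebra.adjoin R {p | ∃ y ∈ P, p = fun x ↦ B y x})
    (h : ∀ v ∈ P', p₁ v = p₂ v) : p₁ = p₂ := by
  funext z
  obtain ⟨v, hv, o, ho, rfl⟩ := Submodule.mem_sup.mp (hcod.eq_top ▸ Submodule.mem_top (x := z))
  rw [apply_add_eq_of_mem_adjoin hp₁ v ho, apply_add_eq_of_mem_adjoin hp₂ v ho, h v hv]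

lemma image_restrict_eq (hB : B.IsRefl) (hcod : Codisjoint P (B.orthogonal P')) :
    (fun (p : V → R) (x : P') ↦ p x) '' {p | ∃ y ∈ P, p = fun x ↦ B y x} =
      {p : P' → R | ∃ y, p = fun x : P' ↦ B y x} := by
  ext φ
  constructor
  · rintro ⟨_, ⟨y, -, rfl⟩, rfl⟩
    exact ⟨y, rfl⟩
  · rintro ⟨y, rfl⟩
    obtain ⟨a, ha, b, hb, rfl⟩ := Submodule.mem_sup.mp (hcod.eq_top ▸ Submodule.mem_top (x := y))
    refine ⟨_, ⟨a, ha, rfl⟩, funext fun x ↦ ?_⟩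
    simp [hB _ _ (LinearMap.BilinForm.mem_orthogonal_iff.mp hb x x.2)]

end PolynomialFunctions

section LieTheory

open LieAlgebra LieModule Module

namespace LinearMap.BilinForm.lieInvariant

variable {K L : Type*} [Field K] [LieRing L] [LieAlgebra K L] {Φ : LinearMap.BilinForm K L}

lemma apply_eq_zero_of_lie_eq_smul (hΦ : Φ.lieInvariant L) {w x y : L} {a b : K}
    (hx : ⁅w, x⁆ = a • x) (hy : ⁅w, y⁆ = b • y) (hab : a + b ≠ 0) : Φ x y = 0 := by
  have h := hΦ w x y
  rw [hx, hy, map_smul, LinearMap.smul_apply, map_smul, smul_eq_mul, smul_eq_mul,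
    ← add_eq_zero_iff_eq_neg, ← add_mul] at h
  exact (mul_eq_zero.mp h).resolve_left hab

lemma apply_eq_zero_of_mem_iSup_eigenspace (hΦ : Φ.lieInvariant L) {ι : Type*} {a : ι → K}
    {w x y : L} {b : K} (hx : x ∈ ⨆ i, (ad K L w).eigenspace (a i)) (hy : ⁅w, y⁆ = b • y)
    (hab : ∀ i, a i + b ≠ 0) : Φ x y = 0 := by
  suffices ⨆ i, (ad K L w).eigenspace (a i) ≤ LinearMap.ker (Φ.flip y) from this hx
  exact iSup_le fun i v hv ↦
    hΦ.apply_eq_zero_of_lie_eq_smul (Module.End.mem_eigenspace_iff.mp hv) hy (hab i)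

end LinearMap.BilinForm.lieInvariant

namespace IsSl2Triple

variable {K L M : Type*} [Field K] [CharZero K] [LieRing L] [LieAlgebra K L]
  [AddCommGroup M] [Module K M] [LieRingModule L M] [LieModule K L M] [FiniteDimensional K M]
  {h e f : L}

lemma exists_pow_toEnd_e_eq_zero (t : IsSl2Triple h e f) {m : M} {μ : K} (hm : ⁅h, m⁆ = μ • m) :
    ∃ n : ℕ, (toEnd K L M e ^ n) m = 0 := by
  by_contra! hne
  have hinj : Function.Injective fun n : ℕ ↦ μ + 2 * (n : K) := fun a b hab ↦ by simpa using hab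
  have := (toEnd K L M h).eigenvectors_linearIndependent' _ hinj _ fun n ↦
    ⟨Module.End.mem_eigenspace_iff.mpr (t.lie_h_pow_toEnd_e hm n), hne n⟩
  have := this.finite
  exact not_finite ℕ

lemma exists_int_eq_of_lie_h_eq_smul (t : IsSl2Triple h e f) {m : M} (hm₀ : m ≠ 0) {μ : K}
    (hm : ⁅h, m⁆ = μ • m) : ∃ n : ℤ, μ = n := by
  obtain ⟨n, hn, hn₁⟩ := Nat.exists_not_and_succ_of_not_zero_of_exists (by simpa using hm₀)
    (t.exists_pow_toEnd_e_eq_zero hm)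
  have P : t.HasPrimitiveVectorWith ((toEnd K L M e ^ n) m) (μ + 2 * n) :=
    ⟨hn, t.lie_h_pow_toEnd_e hm n, by rwa [lie_e_pow_toEnd_e]⟩
  obtain ⟨k, hk⟩ := P.exists_nat
  exact ⟨k - 2 * n, by push_cast; linear_combination hk⟩

end IsSl2Triple

lemma IsSl2Triple.killingForm_h_h {R L : Type*} [CommRing R] [LieRing L] [LieAlgebra R L]
    {h e f : L} (t : IsSl2Triple h e f) : killingForm R L h h = 2 * killingForm R L e f := by
  calc killingForm R L h h = killingForm R L ⁅e, f⁆ h := by rw [t.lie_e_f]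
    _ = killingForm R L e ⁅f, h⁆ := traceForm_apply_lie_apply R L L e f h
    _ = 2 * killingForm R L e f := by
      rw [← lie_skew, t.lie_h_f_nsmul, neg_neg, map_nsmul, nsmul_eq_mul, Nat.cast_ofNat]

section

variable {K L : Type*} [Field K] [LieRing L] [LieAlgebra K L]

variable (K) in
def adPosEigenspaces (w : L) : Submodule K L :=
  ⨆ k : ℕ, (ad K L w).eigenspace (2 * ((k : K) + 1))

lemma adPosEigenspaces_neg (w : L) :
    adPosEigenspaces K (-w) = ⨆ k : ℕ, (ad K L w).eigenspace (-(2 * ((k : K) + 1))) := by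
  simp only [adPosEigenspaces, map_neg, Module.End.eigenspace_neg]

variable [CharZero K]

lemma isSl2Triple_of_ne_zero {w e f : L} (hf : f ≠ 0) (hwe : ⁅w, e⁆ = (2 : K) • e)
    (hwf : ⁅w, f⁆ = -(2 : K) • f) (hef : ⁅e, f⁆ = w) : IsSl2Triple w e f where
  h_ne_zero := by
    rintro rfl
    simp_all [eq_comm (a := (0 : L))]
  lie_e_f := hef
  lie_h_e_nsmul := by rw [hwe, ofNat_smul_eq_nsmul]
  lie_h_f_nsmul := by rw [hwf, neg_smul, ofNat_smul_eq_nsmul]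

end

lemma lie_eq_zero_of_mem_isCartanSubalgebra {K L : Type*} [Field K] [LieRing L] [LieAlgebra K L]
    [FiniteDimensional K L] [IsKilling K L] {H : LieSubalgebra K L} [H.IsCartanSubalgebra]
    {x y : L} (hx : x ∈ H) (hy : y ∈ H) : ⁅x, y⁆ = 0 :=
  congrArg Subtype.val (trivial_lie_zero H H ⟨x, hx⟩ ⟨y, hy⟩)

section Killing

variable {K L : Type*} [Field K] [CharZero K] [LieRing L] [LieAlgebra K L] [FiniteDimensional K L]
  [IsKilling K L] {H : LieSubalgebra K L} [H.IsCartanSubalgebra] [IsTriangularizable K H L]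

open LieAlgebra.IsKilling

lemma IsSl2Triple.killingForm_h_h_ne_zero {h e f : L} (t : IsSl2Triple h e f) (hH : h ∈ H) :
    killingForm K L h h ≠ 0 := by
  set h' : H := ⟨h, hH⟩
  have hint (χ : Weight K H L) : ∃ n : ℤ, χ h' = n := by
    obtain ⟨v, hv, hv₀⟩ := χ.exists_ne_zero
    exact t.exists_int_eq_of_lie_h_eq_smul hv₀ (lie_eq_smul_of_mem_rootSpace hv h')
  choose n hn using hint
  obtain ⟨χ₀, hχ₀⟩ : ∃ χ : Weight K H L, n χ ≠ 0 := by
    by_contra! hall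
    have : h' ∈ ⨅ χ : Weight K H L, χ.ker :=
      Submodule.mem_iInf _ |>.mpr fun χ ↦ by simp [hn, hall]
    rw [iInf_ker_weight_eq_bot, Submodule.mem_bot] at this
    exact t.h_ne_zero (congrArg Subtype.val this)
  have hsum : killingForm K L h h =
      ((∑ χ : Weight K H L, (finrank K (genWeightSpace L χ) : ℤ) * n χ ^ 2 : ℤ) : K) := by
    change traceForm K H L h' h' = _
    rw [traceForm_eq_sum_finrank_nsmul_mul]
    push_cast
    simp [hn, sq]
  rw [hsum, Int.cast_ne_zero]
  refine (Finset.sum_pos' (fun χ _ ↦ by positivity) ⟨χ₀, Finset.mem_univ _, ?_⟩).ne'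
  have : Nontrivial (genWeightSpace L χ₀) :=
    (LieSubmodule.nontrivial_iff_ne_bot K H L).mpr χ₀.genWeightSpace_ne_bot
  have : 0 < finrank K (genWeightSpace L χ₀) := finrank_pos
  positivity

lemma IsSl2Triple.killingForm_e_f_ne_zero {h e f : L} (t : IsSl2Triple h e f) (hH : h ∈ H) :
    killingForm K L e f ≠ 0 := fun h₀ ↦
  t.killingForm_h_h_ne_zero hH (by rw [t.killingForm_h_h, h₀, mul_zero])

lemma eq_zero_of_mem_iSup_eigenspace_of_killingForm_eq_zero {w x : L} (hw : w ∈ H)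
    {ι : Type*} {a : ι → K} (hx : x ∈ ⨆ i, (ad K L w).eigenspace (a i))
    (horth : ∀ i, ∀ y ∈ (ad K L w).eigenspace (-a i), killingForm K L x y = 0) : x = 0 := by
  refine (killingForm_nondegenerate K L).1 x fun z ↦ ?_
  have hz : z ∈ ⨆ χ : Weight K H L, genWeightSpace L χ := by
    rw [iSup_genWeightSpace_eq_top']; trivial
  induction hz using LieSubmodule.iSup_induction' with
  | mem χ v hv =>
    have hwv := lie_eq_smul_of_mem_rootSpace hv ⟨w, hw⟩
    by_cases hχ : ∃ i, χ ⟨w, hw⟩ = -a i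
    · obtain ⟨i, hi⟩ := hχ
      exact horth i v (Module.End.mem_eigenspace_iff.mpr (by rw [← hi]; exact hwv))
    · push Not at hχ
      exact (traceForm_lieInvariant K L L).apply_eq_zero_of_mem_iSup_eigenspace hx hwv
        fun i h ↦ hχ i (by linear_combination h)
  | zero => simp
  | add u v _ _ hu hv => rw [map_add, hu, hv, add_zero]

lemma disjoint_killingForm_orthogonal {w e f : L} (hw : w ∈ H) (hwe : ⁅w, e⁆ = (2 : K) • e)
    (hwf : ⁅w, f⁆ = -(2 : K) • f) (hef : ⁅e, f⁆ = w) :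
    Disjoint (Submodule.span K {f} ⊔ H.toSubmodule ⊔ adPosEigenspaces K w)
      ((killingForm K L).orthogonal
        (Submodule.span K {e} ⊔ H.toSubmodule ⊔ adPosEigenspaces K (-w))) := by
  have hΦ := traceForm_lieInvariant K L L
  have hH (z : L) (hz : z ∈ H) : ⁅w, z⁆ = (0 : K) • z := by
    rw [zero_smul, lie_eq_zero_of_mem_isCartanSubalgebra hw hz]
  rw [Submodule.disjoint_def]
  rintro x hx hxo
  replace hxo (y : L) (hy : y ∈ Submodule.span K {e} ⊔ H.toSubmodule ⊔ adPosEigenspaces K (-w)) :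
      killingForm K L x y = 0 := by
    rw [traceForm_comm]; exact LinearMap.BilinForm.mem_orthogonal_iff.mp hxo y hy
  obtain ⟨u, hu, n, hn, rfl⟩ := Submodule.mem_sup.mp hx
  obtain ⟨cf, hcf, h, hh, rfl⟩ := Submodule.mem_sup.mp hu
  obtain ⟨c, rfl⟩ := Submodule.mem_span_singleton.mp hcf
  have hnH (z : L) (hz : z ∈ H) : killingForm K L n z = 0 :=
    hΦ.apply_eq_zero_of_mem_iSup_eigenspace hn (hH z hz) fun k ↦ by
      simpa using k.cast_add_one_ne_zero
  have hne : killingForm K L n e = 0 :=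
    hΦ.apply_eq_zero_of_mem_iSup_eigenspace hn hwe fun k ↦ by norm_cast
  have hh₀ : h = 0 := by
    have := (traceForm_cartan_nondegenerate K L H).1 ⟨h, hh⟩ fun z ↦ ?_
    · simpa using congrArg Subtype.val this
    have hfz := hΦ.apply_eq_zero_of_lie_eq_smul hwf (hH z z.2) (by norm_num)
    have := hxo z (Submodule.mem_sup_left (Submodule.mem_sup_right z.2))
    simpa [hfz, hnH z z.2] using this
  have hc₀ : c • f = 0 := by
    obtain rfl | hf := eq_or_ne f 0
    · exact smul_zero c
    have hxe := hxo e <| Submodule.mem_sup_left <| Submodule.mem_sup_left <|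
      Submodule.mem_span_singleton_self e
    simp only [hh₀, hne, add_zero, map_add, map_smul, LinearMap.add_apply, LinearMap.smul_apply,
      smul_eq_mul, traceForm_comm K L L f e] at hxe
    have hef₀ := (isSl2Triple_of_ne_zero hf hwe hwf hef).killingForm_e_f_ne_zero hw
    rw [(mul_eq_zero.mp hxe).resolve_right hef₀, zero_smul]
  have hn₀ : n = 0 := by
    refine eq_zero_of_mem_iSup_eigenspace_of_killingForm_eq_zero hw hn fun k y hy ↦ ?_
    have hy' : y ∈ adPosEigenspaces K (-w) := by
      rw [adPosEigenspaces_neg]; exact Submodule.mem_iSup_of_mem k hy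
    simpa [hh₀, hc₀] using hxo y (Submodule.mem_sup_right hy')
  rw [hh₀, hc₀, hn₀, add_zero, add_zero]

theorem isCompl_killingForm_orthogonal {w e f : L} (hw : w ∈ H) (hwe : ⁅w, e⁆ = (2 : K) • e)
    (hwf : ⁅w, f⁆ = -(2 : K) • f) (hef : ⁅e, f⁆ = w) :
    IsCompl (Submodule.span K {f} ⊔ H.toSubmodule ⊔ adPosEigenspaces K w)
      ((killingForm K L).orthogonal
        (Submodule.span K {e} ⊔ H.toSubmodule ⊔ adPosEigenspaces K (-w))) ∧
    IsCompl (Submodule.span K {e} ⊔ H.toSubmodule ⊔ adPosEigenspaces K (-w))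
      ((killingForm K L).orthogonal
        (Submodule.span K {f} ⊔ H.toSubmodule ⊔ adPosEigenspaces K w)) := by
  have h₁ := disjoint_killingForm_orthogonal hw hwe hwf hef
  have h₂ := disjoint_killingForm_orthogonal (neg_mem hw) (by rw [neg_lie, hwf, neg_smul, neg_neg])
    (by rw [neg_lie, hwe, neg_smul]) (by rw [← lie_skew, hef])
  rw [neg_neg] at h₂
  have hB := killingForm_nondegenerate K L
  exact ⟨hB.isCompl_orthogonal_of_disjoint h₁ h₂, hB.isCompl_orthogonal_of_disjoint h₂ h₁⟩

end Killing

end LieTheory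

theorem killing_decomposition_and_restriction_isomorphism_general
    (H : LieSubalgebra ℂ g) (hH : H.IsCartanSubalgebra)
    (w e f : g)
    (hwe : ⁅w, e⁆ = (2 : ℂ) • e) (hwf : ⁅w, f⁆ = -(2 : ℂ) • f) (hef : ⁅e, f⁆ = w)
    (hwH : w ∈ H)
    (Npos Nneg : Submodule ℂ g)
    (hNpos : Npos = ⨆ k : ℕ,
      (LieAlgebra.ad ℂ g w : Module.End ℂ g).eigenspace (2 * ((k : ℂ) + 1)))
    (hNneg : Nneg = ⨆ k : ℕ,
      (LieAlgebra.ad ℂ g w : Module.End ℂ g).eigenspace (-(2 * ((k : ℂ) + 1))))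
    -- `q = ℂf + b` and `q_- = ℂe + b_-`
    (Q Qneg : Submodule ℂ g)
    (hQ : Q = Submodule.span ℂ {f} ⊔ H.toSubmodule ⊔ Npos)
    (hQneg : Qneg = Submodule.span ℂ {e} ⊔ H.toSubmodule ⊔ Nneg)
    -- `S(q)`: the algebra of polynomial functions generated by `(y, ·)`, `y ∈ q`
    (SQ : Subalgebra ℂ (g → ℂ))
    (hSQ : SQ = Algebra.adjoin ℂ
      {p : g → ℂ | ∃ y ∈ Q, p = fun x => killingForm ℂ g y x})
    -- `A(q_-)`: the algebra of polynomial functions on the subspace `q_-`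
    (AQ : Subalgebra ℂ (Qneg → ℂ))
    (hAQ : AQ = Algebra.adjoin ℂ
      {p : Qneg → ℂ | ∃ y : g, p = fun x : Qneg => killingForm ℂ g y (x : g)}) :
    IsCompl Q ((killingForm ℂ g).orthogonal Qneg) ∧
    (∀ p₁ ∈ SQ, ∀ p₂ ∈ SQ, restrictHom Qneg p₁ = restrictHom Qneg p₂ → p₁ = p₂) ∧
    (∀ φ : Qneg → ℂ, φ ∈ AQ ↔ ∃ p ∈ SQ, restrictHom Qneg p = φ) := by
  have hNpos' : Npos = adPosEigenspaces ℂ w := hNpos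
  have hNneg' : Nneg = adPosEigenspaces ℂ (-w) := hNneg.trans (adPosEigenspaces_neg w).symm
  subst hNpos' hNneg' hQ hQneg hSQ hAQ
  obtain ⟨hQ, hQneg⟩ := isCompl_killingForm_orthogonal hwH hwe hwf hef
  refine ⟨hQ, fun p₁ hp₁ p₂ hp₂ hres ↦ eq_of_forall_mem_eq_of_mem_adjoin hQneg.codisjoint hp₁ hp₂
    fun v hv ↦ congrFun hres ⟨v, hv⟩, fun φ ↦ ?_⟩
  rw [← image_restrict_eq (LieModule.traceForm_isSymm ℂ g g).isRefl hQ.codisjoint,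
    ← Subalgebra.mem_map, AlgHom.map_adjoin]
  rfl

/-- Let `q = ℂf + b` and `q_- = ℂe + b_-`.  Then `g = q ⊕ q_-^⊥` (Killing
orthocomplement), and restriction of polynomial functions `S(q) → A(q_-)` (polynomials in
the linear functionals `(y, ·)`, `y ∈ q`, restricted to `q_-`) is an algebra isomorphism
onto the algebra `A(q_-)` of polynomial functions on `q_-`. -/
theorem killing_decomposition_and_restriction_isomorphism
    (ℓ : ℕ) (hrank : ℓ = LieAlgebra.rank ℂ g)
    (H : LieSubalgebra ℂ g) (hH : H.IsCartanSubalgebra)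
    (w e f : g)
    (hwe : ⁅w, e⁆ = (2 : ℂ) • e) (hwf : ⁅w, f⁆ = -(2 : ℂ) • f) (hef : ⁅e, f⁆ = w)
    (hwH : w ∈ H)
    (hH0 : H.toSubmodule = (LieAlgebra.ad ℂ g w : Module.End ℂ g).eigenspace 0)
    (Npos Nneg : Submodule ℂ g)
    (hNpos : Npos = ⨆ k : ℕ,
      (LieAlgebra.ad ℂ g w : Module.End ℂ g).eigenspace (2 * ((k : ℂ) + 1)))
    (hNneg : Nneg = ⨆ k : ℕ,
      (LieAlgebra.ad ℂ g w : Module.End ℂ g).eigenspace (-(2 * ((k : ℂ) + 1))))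
    -- `q = ℂf + b` and `q_- = ℂe + b_-`
    (Q Qneg : Submodule ℂ g)
    (hQ : Q = Submodule.span ℂ {f} ⊔ H.toSubmodule ⊔ Npos)
    (hQneg : Qneg = Submodule.span ℂ {e} ⊔ H.toSubmodule ⊔ Nneg)
    -- `S(q)`: the algebra of polynomial functions generated by `(y, ·)`, `y ∈ q`
    (SQ : Subalgebra ℂ (g → ℂ))
    (hSQ : SQ = Algebra.adjoin ℂ
      {p : g → ℂ | ∃ y ∈ Q, p = fun x => killingForm ℂ g y x})
    -- `A(q_-)`: the algebra of polynomial functions on the subspace `q_-`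
    (AQ : Subalgebra ℂ (Qneg → ℂ))
    (hAQ : AQ = Algebra.adjoin ℂ
      {p : Qneg → ℂ | ∃ y : g, p = fun x : Qneg => killingForm ℂ g y (x : g)}) :
    IsCompl Q ((killingForm ℂ g).orthogonal Qneg) ∧
    (∀ p₁ ∈ SQ, ∀ p₂ ∈ SQ, restrictHom Qneg p₁ = restrictHom Qneg p₂ → p₁ = p₂) ∧
    (∀ φ : Qneg → ℂ, φ ∈ AQ ↔ ∃ p ∈ SQ, restrictHom Qneg p = φ) :=
  killing_decomposition_and_restriction_isomorphism_general H hH w e f hwe hwf hef hwH Npos Nneg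
    hNpos hNneg Q Qneg hQ hQneg SQ hSQ AQ hAQ

end
end
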